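/- arXiv:2307.08371 — 4 statements merged into one kernel-verified Lean document; each statement's English description precedes it below -/
import Mathlib

section
/- For all natural numbers n ≥ 2 and k ≥ 1, ∑_{i=1}^{k−1} C(k, i) · C(n − k, k − i) ≤ 2 · C(k, ⌊k/2⌋) · n^{k−1}, where C denotes the binomial coefficient and n − k is truncated subtraction. -/
lemma geo_sum_le (n : ℕ) (hn : 2 ≤ n) : ∀ m, ∑ j ∈ Finset.Icc 1 m, n ^ j ≤ 2 * n ^ m := by
  intro m
  induction m with
  | zero => simp
  | succ m ih =>
    rw [Finset.sum_Icc_succ_top (by omega)]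
    calc ∑ j ∈ Finset.Icc 1 m, n ^ j + n ^ (m + 1) ≤ 2 * n ^ m + n ^ (m + 1) := by
          omega
      _ ≤ 2 * n ^ (m + 1) := by
          rw [pow_succ]; nlinarith [pow_pos (by omega : 0 < n) m]

/-- For `n ≥ 2` and `k ≥ 1`,
`∑_{i=1}^{k-1} C(k, i) * C(n - k, k - i) ≤ 2 * C(k, ⌊k/2⌋) * n^(k-1)`. -/
theorem sum_choose_mul_choose_le (n k : ℕ) (hn : 2 ≤ n) (hk : 1 ≤ k) :
    ∑ i ∈ Finset.Icc 1 (k - 1), k.choose i * (n - k).choose (k - i)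
      ≤ 2 * k.choose (k / 2) * n ^ (k - 1) := by
  calc ∑ i ∈ Finset.Icc 1 (k - 1), k.choose i * (n - k).choose (k - i)
      ≤ ∑ i ∈ Finset.Icc 1 (k - 1), k.choose (k / 2) * n ^ (k - i) := by
        apply Finset.sum_le_sum
        intro i _
        apply Nat.mul_le_mul (Nat.choose_le_middle i k)
        calc (n - k).choose (k - i) ≤ (n - k) ^ (k - i) := Nat.choose_le_pow _ _
          _ ≤ n ^ (k - i) := Nat.pow_le_pow_left (Nat.sub_le _ _) _
    _ = k.choose (k / 2) * ∑ j ∈ Finset.Icc 1 (k - 1), n ^ j := by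
        rw [Finset.mul_sum]
        apply Finset.sum_nbij' (fun i => k - i) (fun j => k - j) <;>
          simp +contextual [Finset.mem_Icc] <;> omega
    _ ≤ k.choose (k / 2) * (2 * n ^ (k - 1)) :=
        Nat.mul_le_mul_left _ (geo_sum_le n hn _)
    _ = 2 * k.choose (k / 2) * n ^ (k - 1) := by ring
end

section
/- Let X be a finite set with |X| = n and let s be a subset of X with |s| = k, where k ≥ 1 and n ≥ 2. The number of subsets t of X with |t| = k, t ≠ s, and t ∩ s ≠ ∅ is at most 2 · C(k, ⌊k/2⌋) · n^{k−1}. -/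
/-! Union bound over the points of `s`: each of the `k` points lies in at most
`C(n-1, k-1) ≤ n^(k-1)` of the `k`-sets, and `k = C(k, 1) ≤ C(k, ⌊k/2⌋)`. -/

namespace Finset

variable {α : Type*} [DecidableEq α]

theorem filter_powerset_card_eq_mem_subset_image_insert (X : Finset α) (k : ℕ) (x : α) :
    X.powerset.filter (fun t => t.card = k ∧ x ∈ t) ⊆
      ((X.erase x).powersetCard (k - 1)).image (insert x) := by
  intro t ht
  obtain ⟨htX, rfl, hxt⟩ : t ⊆ X ∧ _ ∧ x ∈ t := by simpa only [mem_filter, mem_powerset] using ht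
  exact mem_image.2 ⟨t.erase x,
    mem_powersetCard.2 ⟨erase_subset_erase x htX, card_erase_of_mem hxt⟩, insert_erase hxt⟩

theorem card_filter_powerset_card_eq_mem_le (X : Finset α) (k : ℕ) {x : α} (hx : x ∈ X) :
    (X.powerset.filter (fun t => t.card = k ∧ x ∈ t)).card ≤ (X.card - 1).choose (k - 1) := by
  rw [← card_erase_of_mem hx, ← card_powersetCard]
  exact (card_le_card (filter_powerset_card_eq_mem_subset_image_insert X k x)).trans
    card_image_le

theorem card_filter_powerset_card_eq_inter_nonempty_le {X s : Finset α} (k : ℕ) (hsX : s ⊆ X) :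
    (X.powerset.filter (fun t => t.card = k ∧ (t ∩ s).Nonempty)).card
      ≤ s.card * (X.card - 1).choose (k - 1) := by
  have hcover : X.powerset.filter (fun t => t.card = k ∧ (t ∩ s).Nonempty)
      ⊆ s.biUnion (fun x => X.powerset.filter (fun t => t.card = k ∧ x ∈ t)) := by
    intro t ht
    obtain ⟨htX, hcard, x, hx⟩ := by simpa only [mem_filter, mem_powerset] using ht
    obtain ⟨hxt, hxs⟩ := mem_inter.1 hx
    exact mem_biUnion.2 ⟨x, hxs, mem_filter.2 ⟨mem_powerset.2 htX, hcard, hxt⟩⟩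
  exact (card_le_card hcover).trans <| card_biUnion_le_card_mul _ _ _ fun x hx =>
    card_filter_powerset_card_eq_mem_le X k (hsX hx)

end Finset

open Finset in
theorem card_ksets_meeting_s_le_general {α : Type*} [DecidableEq α]
    (X : Finset α) (n k : ℕ) (hX : X.card = n)
    (s : Finset α) (hsX : s ⊆ X) (hs : s.card = k) :
    (X.powerset.filter (fun t => t.card = k ∧ t ≠ s ∧ (t ∩ s).Nonempty)).card
      ≤ 2 * k.choose (k / 2) * n ^ (k - 1) := by
  calc (X.powerset.filter (fun t => t.card = k ∧ t ≠ s ∧ (t ∩ s).Nonempty)).card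
      ≤ (X.powerset.filter (fun t => t.card = k ∧ (t ∩ s).Nonempty)).card :=
        card_le_card <| monotone_filter_right _ fun _ _ h => ⟨h.1, h.2.2⟩
    _ ≤ k * (n - 1).choose (k - 1) := by
        simpa only [hs, hX] using card_filter_powerset_card_eq_inter_nonempty_le k hsX
    _ ≤ k.choose (k / 2) * n ^ (k - 1) := by
        gcongr
        · simpa only [Nat.choose_one_right] using Nat.choose_le_middle 1 k
        · exact (Nat.choose_le_pow _ _).trans (Nat.pow_le_pow_left (n.sub_le 1) _)
    _ ≤ 2 * k.choose (k / 2) * n ^ (k - 1) := by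
        rw [mul_assoc]
        exact Nat.le_mul_of_pos_left _ two_pos

/-- The number of `k`-subsets `t` of `X` with `t ≠ s` and `t ∩ s ≠ ∅` is at most
`2 * C(k, ⌊k/2⌋) * n^(k-1)`, where `|X| = n ≥ 2`, `s ⊆ X`, `|s| = k ≥ 1`. -/
theorem card_ksets_meeting_s_le {α : Type*} [DecidableEq α]
    (X : Finset α) (n k : ℕ) (hX : X.card = n) (hn : 2 ≤ n) (hk : 1 ≤ k)
    (s : Finset α) (hsX : s ⊆ X) (hs : s.card = k) :
    (X.powerset.filter (fun t => t.card = k ∧ t ≠ s ∧ (t ∩ s).Nonempty)).card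
      ≤ 2 * k.choose (k / 2) * n ^ (k - 1) :=
  card_ksets_meeting_s_le_general X n k hX s hsX hs
end

section
/- Let X be a finite set with |X| = n and let k be a positive integer with 3k < n + 2. Then the family of all k-sets of X can be partitioned into at most 2 · C(k, ⌊k/2⌋) · n^{k−1} + 1 cross-independent subfamilies, each containing at most ⌊n/k⌋ members. Equivalently, there is a coloring of the k-sets of X with at most 2 · C(k, ⌊k/2⌋) · n^{k−1} + 1 colors such that any two distinct k-sets receiving the same color are disjoint, and each color class has at most ⌊n/k⌋ members. -/
/-!
Colour the `k`-sets greedily, one at a time, with the least colour that is neither carried by an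
already coloured `k`-set meeting the current one nor already used `⌊n/k⌋` times. A `k`-set meets
fewer than `k·C(n-1,k-1)` other `k`-sets, and at most `C(n,k)/⌊n/k⌋` colours can be full, so the
greedy colour stays below `k·C(n-1,k-1) + C(n,k)/⌊n/k⌋ ≤ 2·C(k,⌊k/2⌋)·n^(k-1)`.
-/

open Finset

theorem Finset.card_full_fibers_mul_le {ι : Type*} (s : Finset ι) (c : ι → ℕ) (cap : ℕ) :
    #{i ∈ s.image c | cap ≤ #{v ∈ s | c v = i}} * cap ≤ #s :=
  calc #{i ∈ s.image c | cap ≤ #{v ∈ s | c v = i}} * cap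
      ≤ ∑ i ∈ s.image c with cap ≤ #{v ∈ s | c v = i}, #{v ∈ s | c v = i} := by
        rw [← smul_eq_mul]; exact card_nsmul_le_sum _ _ _ fun i hi => (mem_filter.1 hi).2
    _ ≤ ∑ i ∈ s.image c, #{v ∈ s | c v = i} := sum_le_sum_of_subset (filter_subset _ _)
    _ = #s := (card_eq_sum_card_image c s).symm

namespace SimpleGraph

variable {V : Type*} [DecidableEq V] (G : SimpleGraph V) [DecidableRel G.Adj]

def IsCappedColoring (s : Finset V) (cap : ℕ) (c : V → ℕ) : Prop :=
  (∀ v ∈ s, ∀ w ∈ s, G.Adj v w → c v ≠ c w) ∧ ∀ i, #{v ∈ s | c v = i} ≤ cap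

variable {G}

theorem IsCappedColoring.exists_update_insert {s : Finset V} {cap d : ℕ} {c : V → ℕ}
    (hc : G.IsCappedColoring s cap c) {a : V} (ha : a ∉ s) (hcap : 0 < cap)
    (hdeg : #{w ∈ s | G.Adj a w} ≤ d) :
    ∃ i ≤ d + #s / cap, G.IsCappedColoring (insert a s) cap (Function.update c a i) := by
  set full := {i ∈ s.image c | cap ≤ #{v ∈ s | c v = i}}
  set blocked := {w ∈ s | G.Adj a w}.image c ∪ full
  obtain ⟨i, hi, hib⟩ := exists_mem_notMem_of_card_lt_card
    (s := blocked) (t := range (#blocked + 1)) (by simp)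
  have hfull : #full ≤ #s / cap :=
    (Nat.le_div_iff_mul_le hcap).2 (card_full_fibers_mul_le s c cap)
  have hblocked : #blocked ≤ d + #s / cap :=
    (card_union_le _ _).trans (add_le_add (card_image_le.trans hdeg) hfull)
  have hnbr : ∀ w ∈ s, G.Adj a w → c w ≠ i := fun w hw haw hwi =>
    hib (mem_union_left _ (mem_image.2 ⟨w, mem_filter.2 ⟨hw, haw⟩, hwi⟩))
  have hroom : #{v ∈ s | c v = i} < cap := by
    by_contra! h
    by_cases his : i ∈ s.image c
    · exact hib (mem_union_right _ (mem_filter.2 ⟨his, h⟩))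
    · rw [filter_eq_empty_iff.2 fun v hv hvi => his (mem_image.2 ⟨v, hv, hvi⟩)] at h
      exact h.not_gt (by simpa using hcap)
  refine ⟨i, by simp only [mem_range] at hi; omega, ?_, fun j => ?_⟩
  · intro v hv w hw hvw
    rcases mem_insert.1 hv with hva | hvs <;> rcases mem_insert.1 hw with hwa | hws
    · exact (G.ne_of_adj hvw (hva.trans hwa.symm)).elim
    · subst hva
      simpa [Function.update_of_ne (ne_of_mem_of_not_mem hws ha)] using (hnbr w hws hvw).symm
    · subst hwa
      simpa [Function.update_of_ne (ne_of_mem_of_not_mem hvs ha)] using hnbr v hvs hvw.symm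
    · simpa [Function.update_of_ne (ne_of_mem_of_not_mem hvs ha),
        Function.update_of_ne (ne_of_mem_of_not_mem hws ha)] using hc.1 v hvs w hws hvw
  · have hrest : {v ∈ s | Function.update c a i v = j} = {v ∈ s | c v = j} :=
      filter_congr fun v hv => by rw [Function.update_of_ne (ne_of_mem_of_not_mem hv ha)]
    rw [filter_insert, hrest, Function.update_self]
    split_ifs with hij
    · subst hij
      exact (card_insert_le _ _).trans hroom
    · exact hc.2 j

theorem exists_isCappedColoring (s : Finset V) {cap d : ℕ} (hcap : 0 < cap)
    (hdeg : ∀ v ∈ s, #{w ∈ s | G.Adj v w} ≤ d) :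
    ∃ c : V → ℕ, (∀ v ∈ s, c v ≤ d + (#s - 1) / cap) ∧ G.IsCappedColoring s cap c := by
  induction s using Finset.induction_on with
  | empty => exact ⟨0, by simp, by simp [IsCappedColoring]⟩
  | insert a s ha ih =>
    have hdeg' : ∀ v ∈ insert a s, #{w ∈ s | G.Adj v w} ≤ d := fun v hv =>
      (card_le_card (filter_subset_filter _ (subset_insert a s))).trans (hdeg v hv)
    obtain ⟨c, hle, hc⟩ := ih fun v hv => hdeg' v (mem_insert_of_mem hv)
    obtain ⟨i, hi, hc'⟩ := hc.exists_update_insert ha hcap (hdeg' a (mem_insert_self a s))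
    refine ⟨_, fun v hv => ?_, hc'⟩
    rw [card_insert_of_notMem ha, Nat.add_sub_cancel]
    rcases eq_or_ne v a with rfl | hva
    · simpa using hi
    · rw [Function.update_of_ne hva]
      exact (hle v (mem_of_mem_insert_of_ne hv hva)).trans
        (Nat.add_le_add_left (Nat.div_le_div_right (Nat.sub_le _ _)) _)

end SimpleGraph

def intersectionGraph (α : Type*) : SimpleGraph (Finset α) where
  Adj s t := s ≠ t ∧ ¬Disjoint s t
  symm := ⟨fun _ _ h => ⟨h.1.symm, fun h' => h.2 h'.symm⟩⟩
  loopless := ⟨fun _ h => h.1 rfl⟩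

section

variable {α : Type*} [DecidableEq α]

instance : DecidableRel (intersectionGraph α).Adj :=
  fun s t => inferInstanceAs (Decidable (s ≠ t ∧ ¬Disjoint s t))

theorem card_filter_powersetCard_not_disjoint_le {X s : Finset α} {k : ℕ} (hsX : s ⊆ X)
    (hs : #s = k) :
    #{t ∈ X.powersetCard k | ¬Disjoint s t} ≤ k * (#X - 1).choose (k - 1) := by
  have hcover : {t ∈ X.powersetCard k | ¬Disjoint s t}
      ⊆ s.biUnion fun x => {t ∈ X.powersetCard k | {x} ⊆ t} := by
    intro t ht
    obtain ⟨x, hxs, hxt⟩ := not_disjoint_iff.1 (mem_filter.1 ht).2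
    exact mem_biUnion.2 ⟨x, hxs, mem_filter.2 ⟨(mem_filter.1 ht).1, singleton_subset_iff.2 hxt⟩⟩
  have hfiber : ∀ x ∈ s, #{t ∈ X.powersetCard k | {x} ⊆ t} = (#X - 1).choose (k - 1) :=
    fun x hx => by
      rw [card_filter_powersetCard_subset _ _ _ (singleton_subset_iff.2 (hsX hx))] <;>
        simp only [card_singleton]
      rw [← hs]; exact Finset.card_pos.2 ⟨x, hx⟩
  calc #{t ∈ X.powersetCard k | ¬Disjoint s t}
      ≤ ∑ x ∈ s, #{t ∈ X.powersetCard k | {x} ⊆ t} := (card_le_card hcover).trans card_biUnion_le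
    _ = k * (#X - 1).choose (k - 1) := by rw [sum_congr rfl hfiber, sum_const, hs, smul_eq_mul]

theorem card_intersectionGraph_adj_le {X s : Finset α} {k : ℕ} (hsX : s ⊆ X) (hs : #s = k)
    (hk : 0 < k) :
    #{t ∈ X.powersetCard k | (intersectionGraph α).Adj s t}
      ≤ k * (#X - 1).choose (k - 1) - 1 := by
  have hself : s ∈ {t ∈ X.powersetCard k | ¬Disjoint s t} :=
    mem_filter.2 ⟨mem_powersetCard.2 ⟨hsX, hs⟩, by
      rw [disjoint_self_iff_empty, ← ne_eq, ← nonempty_iff_ne_empty, ← card_pos, hs]; exact hk⟩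
  calc #{t ∈ X.powersetCard k | (intersectionGraph α).Adj s t}
      ≤ #({t ∈ X.powersetCard k | ¬Disjoint s t}.erase s) := card_le_card fun t ht => by
        obtain ⟨htX, hst, hmeet⟩ : t ∈ X.powersetCard k ∧ s ≠ t ∧ ¬Disjoint s t := mem_filter.1 ht
        exact mem_erase.2 ⟨hst.symm, mem_filter.2 ⟨htX, hmeet⟩⟩
    _ = #{t ∈ X.powersetCard k | ¬Disjoint s t} - 1 := card_erase_of_mem hself
    _ ≤ k * (#X - 1).choose (k - 1) - 1 :=
        Nat.sub_le_sub_right (card_filter_powersetCard_not_disjoint_le hsX hs) 1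

end

theorem Nat.choose_le_two_mul_pow_mul_div {n k : ℕ} (hk : 0 < k) (hkn : 2 * k ≤ n + 2) :
    n.choose k ≤ 2 * n ^ (k - 1) * (n / k) := by
  obtain ⟨k, rfl⟩ : ∃ j, k = j + 1 := ⟨k - 1, by omega⟩
  rcases n with _ | n
  · simp
  refine Nat.le_of_mul_le_mul_left ?_ hk
  have hdiv : n + 1 ≤ 2 * ((k + 1) * ((n + 1) / (k + 1))) := by
    have := Nat.div_add_mod (n + 1) (k + 1)
    have := Nat.mod_lt (n + 1) hk
    omega
  calc (k + 1) * (n + 1).choose (k + 1) = (n + 1) * n.choose k := by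
        rw [mul_comm, ← Nat.add_one_mul_choose_eq]
    _ ≤ (n + 1) * (n + 1) ^ k := Nat.mul_le_mul_left _
        ((Nat.choose_le_pow n k).trans (Nat.pow_le_pow_left n.le_succ k))
    _ ≤ 2 * ((k + 1) * ((n + 1) / (k + 1))) * (n + 1) ^ k := Nat.mul_le_mul_right _ hdiv
    _ = (k + 1) * (2 * (n + 1) ^ (k + 1 - 1) * ((n + 1) / (k + 1))) := by
        rw [Nat.add_sub_cancel]; ring

theorem Nat.mul_choose_sub_one_add_choose_div_le {n k : ℕ} (hk : 0 < k) (hkn : 2 * k ≤ n + 2) :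
    k * (n - 1).choose (k - 1) - 1 + (n.choose k - 1) / (n / k)
      ≤ 2 * k.choose (k / 2) * n ^ (k - 1) := by
  have hmid : k ≤ k.choose (k / 2) := by simpa using Nat.choose_le_middle 1 k
  have hdeg : k * (n - 1).choose (k - 1) ≤ k * n ^ (k - 1) :=
    Nat.mul_le_mul_left k ((Nat.choose_le_pow _ _).trans (Nat.pow_le_pow_left (n.sub_le 1) _))
  have hfull : (n.choose k - 1) / (n / k) ≤ 2 * n ^ (k - 1) := Nat.div_le_of_le_mul <|
    (Nat.sub_le _ _).trans (mul_comm (n / k) _ ▸ Nat.choose_le_two_mul_pow_mul_div hk hkn)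
  rcases (show k = 1 ∨ 2 ≤ k by omega) with rfl | hk2
  · simp_all
  · have : 2 * n ^ (k - 1) ≤ k * n ^ (k - 1) := Nat.mul_le_mul_right _ hk2
    have : 2 * k * n ^ (k - 1) ≤ 2 * k.choose (k / 2) * n ^ (k - 1) :=
      Nat.mul_le_mul_right _ (by omega)
    have : 2 * k * n ^ (k - 1) = k * n ^ (k - 1) + k * n ^ (k - 1) := by ring
    omega

/-- Lemma 1 of the paper: if `3k < n + 2` (with `|X| = n` and `k ≥ 1`), the `k`-sets of `X`
can be colored with at most `2 * C(k, ⌊k/2⌋) * n^(k-1) + 1` colors so that any two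
distinct `k`-sets with the same color are disjoint, and each color class has at most
`⌊n/k⌋` members. -/
theorem ksets_partition_crossIndependent {α : Type*} [DecidableEq α]
    (X : Finset α) (n k : ℕ) (hX : X.card = n) (hk : 1 ≤ k) (hkn : 3 * k < n + 2) :
    ∃ c : Finset α → ℕ,
      (∀ t ∈ X.powerset, t.card = k → c t < 2 * k.choose (k / 2) * n ^ (k - 1) + 1) ∧
      (∀ s ∈ X.powerset, ∀ t ∈ X.powerset, s.card = k → t.card = k →
        s ≠ t → c s = c t → Disjoint s t) ∧
      (∀ color : ℕ,
        (X.powerset.filter (fun t => t.card = k ∧ c t = color)).card ≤ n / k) := by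
  subst hX
  have hmem : ∀ t ∈ X.powerset, #t = k → t ∈ X.powersetCard k := fun t ht htk =>
    mem_powersetCard.2 ⟨mem_powerset.1 ht, htk⟩
  obtain ⟨c, hbound, hproper, hclass⟩ := (intersectionGraph α).exists_isCappedColoring
    (X.powersetCard k) (Nat.div_pos (by omega : k ≤ #X) hk) fun s hs =>
      card_intersectionGraph_adj_le (mem_powersetCard.1 hs).1 (mem_powersetCard.1 hs).2 hk
  refine ⟨c, fun t ht htk => ?_, fun s hs t ht hsk htk hst hc => ?_, fun i => ?_⟩
  · have hct := hbound t (hmem t ht htk)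
    rw [card_powersetCard] at hct
    have := Nat.mul_choose_sub_one_add_choose_div_le (n := #X) hk (by omega)
    omega
  · by_contra hmeet
    exact hproper s (hmem s hs hsk) t (hmem t ht htk) ⟨hst, hmeet⟩ hc
  · rw [← filter_filter, ← powersetCard_eq_filter]
    exact hclass i
end

section
/- Let V be a finite type and let x : V → V → ℤ satisfy x i j ∈ {0, 1} for all i ≠ j. The following are equivalent: (a) for all i ≠ j, x i j + x j i = 1 (consistency), and for all pairwise distinct i, j, k, 0 ≤ x i j + x j k − x i k and x i j + x j k − x i k ≤ 1 (transitivity); (b) there exists a strict total order ≺ on V such that for all i ≠ j, x i j = 1 if and only if i ≺ j. -/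
/-!
Read `x i j = 1` as a relation `R i j` on distinct vertices. For 0/1 values the consistency
constraint says that exactly one of `R i j`, `R j i` holds, and the two transitivity bounds say
`R i j → R j k → R i k` and `R i k → R i j ∨ R j k`. The first two properties make `R`, restricted
to distinct pairs, a strict total order; conversely every strict total order has all three, the
last one by trichotomy between `i` and `j`.
-/

namespace Int

variable {a b c : ℤ}

theorem add_eq_one_iff_of_zero_or_one (ha : a = 0 ∨ a = 1) (hb : b = 0 ∨ b = 1) :
    a + b = 1 ↔ (a = 1 ↔ ¬b = 1) := by
  omega

theorem add_sub_mem_Icc_iff_of_zero_or_one (ha : a = 0 ∨ a = 1) (hb : b = 0 ∨ b = 1)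
    (hc : c = 0 ∨ c = 1) :
    (0 ≤ a + b - c ∧ a + b - c ≤ 1) ↔ (a = 1 → b = 1 → c = 1) ∧ (c = 1 → a = 1 ∨ b = 1) := by
  omega

end Int

section StrictTotalOrder

variable {V : Type*}

theorem IsStrictTotalOrder.rel_iff_not_rel_swap {r : V → V → Prop} [IsStrictTotalOrder V r]
    {i j : V} (hij : i ≠ j) : r i j ↔ ¬r j i := by
  refine ⟨asymm, fun hji => ?_⟩
  rcases trichotomous_of r i j with h | h | h
  exacts [h, (hij h).elim, (hji h).elim]

theorem IsStrictTotalOrder.rel_or_rel_of_rel {r : V → V → Prop} [IsStrictTotalOrder V r]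
    {i k : V} (j : V) (hik : r i k) : r i j ∨ r j k := by
  rcases trichotomous_of r i j with h | rfl | h
  exacts [Or.inl h, Or.inr hik, Or.inr (_root_.trans h hik)]

theorem isStrictTotalOrder_ne_and {R : V → V → Prop}
    (hcons : ∀ i j, i ≠ j → (R i j ↔ ¬R j i))
    (htrans : ∀ i j k, i ≠ j → j ≠ k → i ≠ k → R i j → R j k → R i k) :
    IsStrictTotalOrder V (fun i j => i ≠ j ∧ R i j) where
  irrefl _ h := h.1 rfl
  trichotomous i j hij hji := by
    by_contra hne
    exact hji ⟨Ne.symm hne, (hcons j i (Ne.symm hne)).2 (not_and.1 hij hne)⟩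
  trans := by
    rintro i j k ⟨hij, hRij⟩ ⟨hjk, hRjk⟩
    have hik : i ≠ k := by
      rintro rfl
      exact (hcons i j hij).1 hRij hRjk
    exact ⟨hik, htrans i j k hij hjk hik hRij hRjk⟩

theorem exists_isStrictTotalOrder_iff {R : V → V → Prop} :
    (∃ r : V → V → Prop, IsStrictTotalOrder V r ∧ ∀ i j, i ≠ j → (R i j ↔ r i j)) ↔
      (∀ i j, i ≠ j → (R i j ↔ ¬R j i)) ∧
        ∀ i j k, i ≠ j → j ≠ k → i ≠ k →
          (R i j → R j k → R i k) ∧ (R i k → R i j ∨ R j k) := by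
  constructor
  · rintro ⟨r, hr, hR⟩
    refine ⟨fun i j hij => ?_, fun i j k hij hjk hik => ?_⟩
    · rw [hR i j hij, hR j i hij.symm]
      exact IsStrictTotalOrder.rel_iff_not_rel_swap hij
    · rw [hR i j hij, hR j k hjk, hR i k hik]
      exact ⟨_root_.trans, IsStrictTotalOrder.rel_or_rel_of_rel j⟩
  · rintro ⟨hcons, htrans⟩
    exact ⟨_, isStrictTotalOrder_ne_and hcons fun i j k hij hjk hik => (htrans i j k hij hjk hik).1,
      fun i j hij => (and_iff_right hij).symm⟩

end StrictTotalOrder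

theorem ordering_constraints_iff_strictTotalOrder_general {V : Type*}
    (x : V → V → ℤ) (h01 : ∀ i j, i ≠ j → x i j = 0 ∨ x i j = 1) :
    ((∀ i j, i ≠ j → x i j + x j i = 1) ∧
      (∀ i j k, i ≠ j → j ≠ k → i ≠ k →
        0 ≤ x i j + x j k - x i k ∧ x i j + x j k - x i k ≤ 1)) ↔
    (∃ r : V → V → Prop, IsStrictTotalOrder V r ∧
      ∀ i j, i ≠ j → (x i j = 1 ↔ r i j)) := by
  have hcons : (∀ i j, i ≠ j → x i j + x j i = 1) ↔
      ∀ i j, i ≠ j → (x i j = 1 ↔ ¬x j i = 1) :=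
    forall₂_congr fun i j => forall_congr' fun hij =>
      Int.add_eq_one_iff_of_zero_or_one (h01 i j hij) (h01 j i hij.symm)
  have htrans : (∀ i j k, i ≠ j → j ≠ k → i ≠ k →
        0 ≤ x i j + x j k - x i k ∧ x i j + x j k - x i k ≤ 1) ↔
      ∀ i j k, i ≠ j → j ≠ k → i ≠ k →
        (x i j = 1 → x j k = 1 → x i k = 1) ∧ (x i k = 1 → x i j = 1 ∨ x j k = 1) :=
    forall₃_congr fun i j k => forall_congr' fun hij => forall_congr' fun hjk =>
      forall_congr' fun hik =>
        Int.add_sub_mem_Icc_iff_of_zero_or_one (h01 i j hij) (h01 j k hjk) (h01 i k hik)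
  exact (hcons.and htrans).trans exists_isStrictTotalOrder_iff.symm

/-- The consistency constraints `x i j + x j i = 1` together with the linear transitivity
constraints `0 ≤ x i j + x j k - x i k ≤ 1` characterize exactly those 0/1-assignments
that arise from a strict total order on the vertices via `x i j = 1 ↔ i ≺ j`. -/
theorem ordering_constraints_iff_strictTotalOrder {V : Type*} [Fintype V]
    (x : V → V → ℤ) (h01 : ∀ i j, i ≠ j → x i j = 0 ∨ x i j = 1) :
    ((∀ i j, i ≠ j → x i j + x j i = 1) ∧
      (∀ i j k, i ≠ j → j ≠ k → i ≠ k →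
        0 ≤ x i j + x j k - x i k ∧ x i j + x j k - x i k ≤ 1)) ↔
    (∃ r : V → V → Prop, IsStrictTotalOrder V r ∧
      ∀ i j, i ≠ j → (x i j = 1 ↔ r i j)) :=
  ordering_constraints_iff_strictTotalOrder_general x h01
end
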